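/- If an automorphism of order two acts on a directed strongly regular graph with parameters (22,9,6,3,4) and fixes exactly f_2 vertices, then f_2 ∈ {0,6,8,10,12,14,16}. -/

import Mathlib

/-!
An involution pairs up the vertices it moves, so every `σ`-invariant vertex set has the parity
of its fixed part. Applied to `V`, to out-neighbourhoods and to the sets of `2`-paths between
fixed vertices, and using `A² = 4J - A + 2I`, this makes the number `f` of fixed vertices even and
gives the adjacency matrix `B` of the subgraph on the fixed vertices `B𝟙 = 𝟙` and `B² = B`
modulo `2`. A fixed vertex `x` with a single out-neighbour `j` in that subgraph would give
`(B²) x j = 0 ≠ 1`, so all these out-degrees are odd and at least `3`; on four vertices this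
forces `B = J - I`, whose square has odd diagonal. Hence `f = 0` or `f ≥ 5`.

For a moved vertex `x` and `y = σ x`, invariance gives
`2 ((A²) x x - (A²) x y) = ∑ z, (a x z - a y z) * (a z x - a z y)`. The left side is
`4 + 2 a x y`; fixed `z` contribute `0`, `z = x` and `z = y` contribute at most `a x y` each and
every other `z` at most `1`, so at least six vertices move and `f ≤ 16`.
-/

open Matrix BigOperators

def adjM {V : Type} [Fintype V] (E : V → V → Bool) : Matrix V V ℤ :=
  Matrix.of fun x y => if E x y then 1 else 0

def IsDSRG {V : Type} [Fintype V] [DecidableEq V] (E : V → V → Bool)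
    (v k t l m : ℕ) : Prop :=
  Fintype.card V = v ∧ (∀ x, E x x = false) ∧
  adjM E * adjM E + ((m : ℤ) - (l : ℤ)) • adjM E - ((t : ℤ) - (m : ℤ)) • (1 : Matrix V V ℤ)
    = (m : ℤ) • Matrix.of (fun _ _ => (1 : ℤ)) ∧
  adjM E * Matrix.of (fun _ _ => (1 : ℤ)) = (k : ℤ) • Matrix.of (fun _ _ => (1 : ℤ)) ∧
  Matrix.of (fun _ _ => (1 : ℤ)) * adjM E = (k : ℤ) • Matrix.of (fun _ _ => (1 : ℤ))

def IsAut {V : Type} (E : V → V → Bool) (σ : Equiv.Perm V) : Prop :=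
  ∀ x y, E (σ x) (σ y) = E x y

def autGroup {V : Type} (E : V → V → Bool) : Subgroup (Equiv.Perm V) where
  carrier := {σ | ∀ x y, E (σ x) (σ y) = E x y}
  one_mem' := fun _ _ => rfl
  mul_mem' := by
    intro a b ha hb x y
    simp only [Equiv.Perm.coe_mul, Function.comp_apply]
    rw [ha, hb]
  inv_mem' := by
    intro a ha x y
    have := ha (a⁻¹ x) (a⁻¹ y)
    simpa [Equiv.Perm.coe_inv] using this.symm

def Iso {V W : Type} (E : V → V → Bool) (F : W → W → Bool) : Prop :=
  ∃ φ : V ≃ W, ∀ x y, F (φ x) (φ y) = E x y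

open Finset Function

lemma Equiv.Perm.involutive_of_orderOf_eq_two {V : Type} {σ : Equiv.Perm V} (h : orderOf σ = 2) :
    Involutive σ := fun x => by
  rw [← Equiv.Perm.mul_apply, ← sq, ← h, pow_orderOf_eq_one, Equiv.Perm.one_apply]

section Involution

variable {V : Type} [DecidableEq V] {σ : Equiv.Perm V}

lemma card_filter_fixed_modEq_two (hσ : Involutive σ) {s : Finset V}
    (hs : ∀ x, σ x ∈ s ↔ x ∈ s) : #{x ∈ s | σ x = x} ≡ #s [MOD 2] := by
  have hmoved : ((#{x ∈ s | ¬σ x = x} : ℕ) : ZMod 2) = 0 := by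
    rw [card_eq_sum_ones, Nat.cast_sum, Nat.cast_one]
    refine sum_involution (fun x _ => σ x) (fun _ _ => CharTwo.add_self_eq_zero 1)
      (fun x hx _ => (mem_filter.1 hx).2) (fun x hx => ?_) (fun x _ => hσ x)
    simp only [mem_filter, hs] at hx ⊢
    exact ⟨hx.1, fun h => hx.2 (by rw [← h, hσ])⟩
  rw [← ZMod.natCast_eq_natCast_iff, ← card_filter_add_card_filter_not (s := s)
    (fun x => σ x = x), Nat.cast_add, hmoved, add_zero]

end Involution

section FixedPart

variable {V : Type} {E : V → V → Bool} {F : Finset V}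

lemma three_le_card_filter_adj (hirr : ∀ x, E x x = false)
    (hdeg : ∀ x ∈ F, Odd #{z ∈ F | E x z})
    (hpath : ∀ x ∈ F, ∀ y ∈ F, Odd #{z ∈ F | E x z ∧ E z y} ↔ E x y) {x : V} (hx : x ∈ F) :
    3 ≤ #{z ∈ F | E x z} := by
  obtain ⟨r, hr⟩ := hdeg x hx
  suffices #{z ∈ F | E x z} ≠ 1 by omega
  intro h1
  obtain ⟨j, hj⟩ := card_eq_one.1 h1
  have hjF : j ∈ F ∧ E x j := mem_filter.1 (hj ▸ mem_singleton_self j)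
  -- the only out-neighbour `j` of `x` has no loop, so there is no path `x → z → j`
  have hempty : {z ∈ F | E x z ∧ E z j} = ∅ := by
    refine filter_eq_empty_iff.2 fun z hz ⟨hxz, hzj⟩ => ?_
    have : z = j := mem_singleton.1 (hj ▸ mem_filter.2 ⟨hz, hxz⟩)
    simp [this, hirr] at hzj
  simpa [hempty] using (hpath x hx j hjF.1).2 hjF.2

lemma five_le_card_of_odd_paths [DecidableEq V] (hirr : ∀ x, E x x = false)
    (hdeg : ∀ x ∈ F, Odd #{z ∈ F | E x z})
    (hpath : ∀ x ∈ F, ∀ y ∈ F, Odd #{z ∈ F | E x z ∧ E z y} ↔ E x y) (hF : F.Nonempty) :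
    5 ≤ #F := by
  have hsub : ∀ x ∈ F, {z ∈ F | E x z} ⊆ F.erase x := fun x _ z hz => by
    simp only [mem_filter] at hz
    exact mem_erase.2 ⟨fun h => by simp [h, hirr] at hz, hz.1⟩
  obtain ⟨x, hx⟩ := hF
  have h4 : 3 ≤ #F - 1 := (three_le_card_filter_adj hirr hdeg hpath hx).trans
    ((card_le_card (hsub x hx)).trans_eq (card_erase_of_mem hx))
  by_contra! h
  have hfull : ∀ y ∈ F, {z ∈ F | E y z} = F.erase y := fun y hy =>
    eq_of_subset_of_card_le (hsub y hy) (by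
      rw [card_erase_of_mem hy]; have := three_le_card_filter_adj hirr hdeg hpath hy; omega)
  have hcycles : {z ∈ F | E x z ∧ E z x} = F.erase x := by
    ext z
    have hzx := congrArg (z ∈ ·) (hfull x hx)
    have hxz := fun hz => congrArg (x ∈ ·) (hfull z hz)
    simp only [mem_filter, mem_erase, eq_iff_iff] at hzx hxz ⊢
    grind
  have := (hpath x hx x hx).1 (by rw [hcycles, card_erase_of_mem hx]; exact ⟨1, by omega⟩)
  simp [hirr] at this

end FixedPart

lemma Matrix.two_mul_mul_self_apply_sub_eq_sum {V R : Type} [Fintype V] [CommRing R]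
    {σ : Equiv.Perm V} (hσ : Involutive σ) {M : Matrix V V R}
    (hM : ∀ i j, M (σ i) (σ j) = M i j) (x : V) :
    2 * ((M * M) x x - (M * M) x (σ x)) =
      ∑ z, (M x z - M (σ x) z) * (M z x - M z (σ x)) := by
  have hyy : ∑ z, M (σ x) z * M z (σ x) = ∑ z, M x z * M z x := by
    rw [← Equiv.sum_comp σ]; simp only [hM]
  have hyx : ∑ z, M (σ x) z * M z x = ∑ z, M x z * M z (σ x) := by
    rw [← Equiv.sum_comp σ]
    refine sum_congr rfl fun z _ => ?_
    rw [hM, ← hM z, hσ]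
  simp only [Matrix.mul_apply, sub_mul, mul_sub, sum_sub_distrib, hyy, hyx]
  ring

section Automorphism

variable {V : Type} [Fintype V] {E : V → V → Bool} {σ : Equiv.Perm V}

lemma adjM_mul_adjM_apply (x y : V) : (adjM E * adjM E) x y = #{z | E x z ∧ E z y} := by
  simp only [adjM, Matrix.mul_apply, Matrix.of_apply, boole_mul, ← ite_and, sum_boole]

lemma sum_adjM_apply (x : V) : ∑ z, adjM E x z = #{z | E x z} := by
  simp [adjM, ← sum_boole]

lemma IsAut.adjM_apply_apply (hσ : IsAut E σ) (x y : V) : adjM E (σ x) (σ y) = adjM E x y := by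
  simp [adjM, hσ x y]

lemma IsAut.sum_add_two_le_card_moved [DecidableEq V] (hσ : IsAut E σ) (hinv : Involutive σ)
    (hirr : ∀ x, E x x = false) {x : V} (hx : σ x ≠ x) :
    ∑ z, (adjM E x z - adjM E (σ x) z) * (adjM E z x - adjM E z (σ x)) + 2 ≤
      2 * adjM E x (σ x) + #{z | σ z ≠ z} := by
  set term : V → ℤ := fun z => (adjM E x z - adjM E (σ x) z) * (adjM E z x - adjM E z (σ x))
  have hterm_le : ∀ z, term z ≤ 1 := fun z => by
    simp only [term, adjM, Matrix.of_apply]; split_ifs <;> norm_num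
  have hterm_fixed : ∀ z, σ z = z → term z = 0 := fun z hz => by
    have : adjM E z (σ x) = adjM E z x := by rw [← hσ.adjM_apply_apply z x, hz]
    simp only [term, this, sub_self, mul_zero]
  have hterm_pair : term x + term (σ x) ≤ 2 * adjM E x (σ x) := by
    simp only [term, adjM, Matrix.of_apply, hirr, Bool.false_eq_true, if_false]
    split_ifs <;> norm_num
  set moved : Finset V := {z | σ z ≠ z}
  have hxm : x ∈ moved := by simpa [moved] using hx
  have hym : σ x ∈ moved.erase x := by simp [moved, hinv x, hx, hx.symm]
  have hcard : #((moved.erase x).erase (σ x)) + 2 = #moved := by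
    rw [card_erase_of_mem hym, card_erase_of_mem hxm]
    have := card_pos.2 ⟨_, hym⟩; rw [card_erase_of_mem hxm] at this; omega
  calc ∑ z, term z + 2
      = term x + term (σ x) + ∑ z ∈ (moved.erase x).erase (σ x), term z + 2 := by
        rw [← sum_subset (subset_univ moved)
            fun z _ hz => hterm_fixed z (by simpa [moved] using hz),
          ← add_sum_erase _ _ hxm, ← add_sum_erase _ _ hym]
        ring
    _ ≤ 2 * adjM E x (σ x) + #((moved.erase x).erase (σ x)) + 2 := by
        gcongr
        simpa using sum_le_card_nsmul _ _ _ fun z _ => hterm_le z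
    _ = 2 * adjM E x (σ x) + #moved := by push_cast [← hcard]; ring

end Automorphism

namespace IsDSRG

variable {V : Type} [Fintype V] [DecidableEq V] {E : V → V → Bool} {v k t l m : ℕ}

lemma card_filter_adj (hG : IsDSRG E v k t l m) (x : V) : #{z | E x z} = k := by
  have h := congrFun (congrFun hG.2.2.2.1 x) x
  simp only [Matrix.mul_apply, Matrix.of_apply, mul_one, Matrix.smul_apply, smul_eq_mul,
    sum_adjM_apply] at h
  exact_mod_cast h

lemma card_filter_adj_adj (hG : IsDSRG E v k t l m) (x y : V) :
    (#{z | E x z ∧ E z y} : ℤ) = m + (l - m) * adjM E x y + if x = y then (t : ℤ) - m else 0 := by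
  have h := congrFun (congrFun hG.2.2.1 x) y
  simp only [Matrix.add_apply, Matrix.sub_apply, Matrix.smul_apply, Matrix.one_apply,
    Matrix.of_apply, smul_eq_mul, adjM_mul_adjM_apply] at h
  split_ifs at h ⊢ <;> linarith

variable {σ : Equiv.Perm V}

lemma odd_card_fixed_adj (hG : IsDSRG E v k t l m) (hk : Odd k) (hσ : IsAut E σ)
    (hinv : Involutive σ) {x : V} (hx : σ x = x) : Odd #{z ∈ {z | σ z = z} | E x z} := by
  have hmod := card_filter_fixed_modEq_two hinv (s := {z | E x z}) fun z => by
    simpa [hx] using hσ x z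
  rw [filter_comm, Nat.odd_iff, hmod, hG.card_filter_adj]
  exact Nat.odd_iff.1 hk

lemma odd_card_fixed_adj_adj_iff (hG : IsDSRG E v k t l m) (hl : Odd l) (ht : Even t)
    (hm : Even m) (hσ : IsAut E σ) (hinv : Involutive σ) {x y : V} (hx : σ x = x)
    (hy : σ y = y) : Odd #{z ∈ {z | σ z = z} | E x z ∧ E z y} ↔ E x y := by
  have hmod := card_filter_fixed_modEq_two hinv (s := {z | E x z ∧ E z y}) fun z => by
    simp only [mem_filter, mem_univ, true_and]
    rw [← hσ x z, ← hσ z y, hx, hy]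
  rw [filter_comm, Nat.odd_iff, hmod, ← Nat.odd_iff, ← Int.odd_coe_nat, hG.card_filter_adj_adj]
  obtain ⟨l, rfl⟩ := hl
  obtain ⟨t, rfl⟩ := ht
  obtain ⟨m, rfl⟩ := hm
  simp only [adjM, Matrix.of_apply, Int.odd_iff]
  split_ifs <;> simp_all <;> omega

lemma two_mul_succ_le_card_moved (hG : IsDSRG E v k t l m) (hlm : l + 1 = m)
    (hσ : IsAut E σ) (hinv : Involutive σ) {x : V} (hx : σ x ≠ x) :
    2 * (t + 1) ≤ #{z | σ z ≠ z} + 2 * m := by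
  have key := hσ.sum_add_two_le_card_moved hinv hG.2.1 hx
  rw [← Matrix.two_mul_mul_self_apply_sub_eq_sum hinv hσ.adjM_apply_apply,
    adjM_mul_adjM_apply, adjM_mul_adjM_apply, hG.card_filter_adj_adj,
    hG.card_filter_adj_adj, if_pos rfl, if_neg hx.symm] at key
  have hdiag : adjM E x x = 0 := by simp [adjM, hG.2.1]
  have hlm' : (l : ℤ) - m = -1 := by omega
  rw [hdiag, hlm'] at key
  omega

end IsDSRG

/-- an automorphism of order two of a DSRG(22,9,6,3,4) fixes
`f₂ ∈ {0,6,8,10,12,14,16}` vertices. -/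
theorem automorphism_of_order_two_fixed_points {V : Type} [Fintype V] [DecidableEq V]
    (E : V → V → Bool) (hG : IsDSRG E 22 9 6 3 4)
    (σ : Equiv.Perm V) (hσ : IsAut E σ) (horder : orderOf σ = 2) :
    (Finset.univ.filter fun x => σ x = x).card
      ∈ ({0, 6, 8, 10, 12, 14, 16} : Set ℕ) := by
  have hinv := Equiv.Perm.involutive_of_orderOf_eq_two horder
  obtain ⟨x, hx⟩ : ∃ x, σ x ≠ x := by
    by_contra! h
    simp [show σ = 1 from Equiv.ext h] at horder
  have hmoved := hG.two_mul_succ_le_card_moved rfl hσ hinv hx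
  have hsplit : #{z | σ z = z} + #{z | σ z ≠ z} = 22 := by
    rw [card_filter_add_card_filter_not, card_univ, hG.1]
  have heven : #{z | σ z = z} ≡ 22 [MOD 2] := by
    simpa [hG.1] using card_filter_fixed_modEq_two hinv (s := univ) (by simp)
  have hfixed : ({z | σ z = z} : Finset V).Nonempty → 5 ≤ #{z | σ z = z} :=
    five_le_card_of_odd_paths hG.2.1
      (fun y hy => hG.odd_card_fixed_adj (by decide) hσ hinv (mem_filter.1 hy).2)
      (fun y hy w hw => hG.odd_card_fixed_adj_adj_iff (by decide) (by decide) (by decide) hσ hinv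
        (mem_filter.1 hy).2 (mem_filter.1 hw).2)
  rw [← card_pos] at hfixed
  unfold Nat.ModEq at heven
  simp only [Set.mem_insert_iff, Set.mem_singleton_iff]
  omega
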